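/- For every M > 0 there exists a constant κ > 0, depending only on M, with the following property: for every n ≥ 3 and all i.i.d. real-valued random variables K_1, …, K_n with E[K_1] = β and E[K_1²] ≤ M, the truncated sample mean β̂ := (1/n)·Σ_{i=1}^n K_i·1_{{|K_i| ≤ ρ_n}}, with ρ_n := √(n/ln n), satisfies P(|β̂ − β| ≥ κ·√((ln n)/n)) ≤ 2·n^{−4}. (This is the generic Bernstein-type concentration bound for the truncated empirical mean underlying the proof of Lemma 3 of the paper.) -/

import Mathlib

/-!
Truncating at level `ρ` bounds the summands by `ρ` and moves each mean by at most `E[K²] / ρ`.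
For centred summands bounded by `c` with second moment at most `v`, the inequality
`exp x ≤ 1 + x + x ^ 2` on `|x| ≤ 1` gives the Bernstein-type bound `E[exp (s Y)] ≤ exp (v s²)`
whenever `s c ≤ 1`, and independence turns it into a Chernoff bound for the sum. With
`t = √(log n / n)`, `ρ = 1 / t` and `s = t / 2`, the bias is at most `M t` and a deviation
`(M / 2 + 8) t` of the centred truncated mean has probability at most
`2 exp (-4 n t²) = 2 n⁻⁴`, whence `κ = 3 M / 2 + 8`.
-/

open MeasureTheory ProbabilityTheory Real

section Bernstein

variable {Ω : Type*} [MeasurableSpace Ω] {P : Measure Ω} [IsProbabilityMeasure P]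

lemma mgf_le_exp_mul_sq_of_abs_le {Y : Ω → ℝ} {c v s : ℝ} (hY : AEStronglyMeasurable Y P)
    (hb : ∀ᵐ ω ∂P, |Y ω| ≤ c) (hsc : |s| * c ≤ 1) (h0 : ∫ ω, Y ω ∂P = 0)
    (hv : ∫ ω, Y ω ^ 2 ∂P ≤ v) :
    mgf Y P s ≤ exp (v * s ^ 2) := by
  have hY_int : Integrable Y P := .of_bound hY c (by simpa only [norm_eq_abs] using hb)
  have hY2_int : Integrable (fun ω => Y ω ^ 2) P :=
    .of_bound (hY.pow 2) (c ^ 2) (hb.mono fun ω hω => by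
      rw [norm_pow, norm_eq_abs]; exact pow_le_pow_left₀ (abs_nonneg _) hω 2)
  have hquad : ∀ᵐ ω ∂P, exp (s * Y ω) ≤ 1 + s * Y ω + s ^ 2 * Y ω ^ 2 := hb.mono fun ω hω => by
    have hsY : |s * Y ω| ≤ 1 := by
      rw [abs_mul]
      exact (mul_le_mul_of_nonneg_left hω (abs_nonneg s)).trans hsc
    have := (abs_le.mp (abs_exp_sub_one_sub_id_le hsY)).2
    linarith [mul_pow s (Y ω) 2]
  have hlin_int : Integrable (fun ω => 1 + s * Y ω) P :=
    (integrable_const 1).add (hY_int.const_mul s)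
  calc mgf Y P s ≤ ∫ ω, (1 + s * Y ω + s ^ 2 * Y ω ^ 2) ∂P :=
        integral_mono_of_nonneg (.of_forall fun ω => (exp_pos _).le)
          (hlin_int.add (hY2_int.const_mul _)) hquad
    _ = 1 + s ^ 2 * ∫ ω, Y ω ^ 2 ∂P := by
        rw [integral_add hlin_int (hY2_int.const_mul _),
          integral_add (integrable_const 1) (hY_int.const_mul s), integral_const_mul,
          integral_const_mul, h0]
        simp
    _ ≤ 1 + v * s ^ 2 := by nlinarith [sq_nonneg s]
    _ ≤ exp (v * s ^ 2) := by linarith [add_one_le_exp (v * s ^ 2)]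

variable {ι : Type*} [Fintype ι] {Y : ι → Ω → ℝ} {c v s : ℝ}

lemma measureReal_sum_ge_le_of_abs_le (a : ℝ) (hY : ∀ i, Measurable (Y i))
    (hindep : iIndepFun Y P) (hb : ∀ i, ∀ᵐ ω ∂P, |Y i ω| ≤ c) (hs : 0 ≤ s) (hsc : s * c ≤ 1)
    (h0 : ∀ i, ∫ ω, Y i ω ∂P = 0) (hv : ∀ i, ∫ ω, Y i ω ^ 2 ∂P ≤ v) :
    P.real {ω | a ≤ ∑ i, Y i ω} ≤ exp (-s * a + Fintype.card ι * v * s ^ 2) := by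
  have hexp_int : ∀ i ∈ Finset.univ, Integrable (fun ω => exp (s * Y i ω)) P := fun i _ =>
    .of_bound ((hY i).const_mul s).exp.aestronglyMeasurable (exp (s * c)) ((hb i).mono
      fun ω hω => by
        rw [norm_eq_abs, abs_of_pos (exp_pos _), exp_le_exp]
        exact mul_le_mul_of_nonneg_left ((le_abs_self _).trans hω) hs)
  have hmgf : mgf (∑ i, Y i) P s ≤ exp (Fintype.card ι * v * s ^ 2) := by
    rw [hindep.mgf_sum hY, mul_assoc, exp_nat_mul, ← Finset.card_univ, ← Finset.prod_const]
    refine Finset.prod_le_prod (fun i _ => mgf_nonneg) fun i _ => ?_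
    exact mgf_le_exp_mul_sq_of_abs_le (hY i).aestronglyMeasurable (hb i)
      (by rwa [abs_of_nonneg hs]) (h0 i) (hv i)
  calc P.real {ω | a ≤ ∑ i, Y i ω} = P.real {ω | a ≤ (∑ i, Y i) ω} := by
        simp only [Finset.sum_apply]
    _ ≤ exp (-s * a) * mgf (∑ i, Y i) P s :=
        measure_ge_le_exp_mul_mgf a hs (hindep.integrable_exp_mul_sum hY hexp_int)
    _ ≤ exp (-s * a) * exp (Fintype.card ι * v * s ^ 2) := by gcongr
    _ = exp (-s * a + Fintype.card ι * v * s ^ 2) := (exp_add _ _).symm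

lemma measureReal_abs_sum_ge_le_of_abs_le (a : ℝ) (hY : ∀ i, Measurable (Y i))
    (hindep : iIndepFun Y P) (hb : ∀ i, ∀ᵐ ω ∂P, |Y i ω| ≤ c) (hs : 0 ≤ s) (hsc : s * c ≤ 1)
    (h0 : ∀ i, ∫ ω, Y i ω ∂P = 0) (hv : ∀ i, ∫ ω, Y i ω ^ 2 ∂P ≤ v) :
    P.real {ω | a ≤ |∑ i, Y i ω|} ≤ 2 * exp (-s * a + Fintype.card ι * v * s ^ 2) := by
  have hupper := measureReal_sum_ge_le_of_abs_le a hY hindep hb hs hsc h0 hv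
  have hlower := measureReal_sum_ge_le_of_abs_le (Y := fun i ω => -Y i ω) a
    (fun i => (hY i).neg) (hindep.comp (fun _ x => -x) fun _ => measurable_neg)
    (fun i => (hb i).mono fun ω hω => by rwa [abs_neg]) hs hsc
    (fun i => by rw [integral_neg, h0 i, neg_zero]) (fun i => by simpa only [neg_sq] using hv i)
  have hsplit : {ω | a ≤ |∑ i, Y i ω|} ⊆ {ω | a ≤ ∑ i, Y i ω} ∪ {ω | a ≤ ∑ i, -Y i ω} := by
    intro ω hω
    simp only [Set.mem_union, Set.mem_ofPred_eq, Finset.sum_neg_distrib]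
    exact le_abs.mp hω
  calc P.real {ω | a ≤ |∑ i, Y i ω|}
      ≤ P.real {ω | a ≤ ∑ i, Y i ω} + P.real {ω | a ≤ ∑ i, -Y i ω} :=
        (measureReal_mono hsplit).trans (measureReal_union_le _ _)
    _ ≤ 2 * exp (-s * a + Fintype.card ι * v * s ^ 2) := by linarith

end Bernstein

/-- Unlike `ProbabilityTheory.truncation`, which keeps `(-ρ, ρ]`, this keeps `|x| ≤ ρ`. -/
noncomputable def truncate (ρ x : ℝ) : ℝ := if |x| ≤ ρ then x else 0

section Truncation

variable {ρ : ℝ}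

lemma measurable_truncate (ρ : ℝ) : Measurable (truncate ρ) :=
  Measurable.ite (measurableSet_le measurable_id.abs measurable_const) measurable_id
    measurable_const

lemma abs_truncate_le_bound (hρ : 0 ≤ ρ) (x : ℝ) : |truncate ρ x| ≤ ρ := by
  unfold truncate
  split_ifs with h
  · exact h
  · rwa [abs_zero]

lemma abs_truncate_le_abs_self (ρ x : ℝ) : |truncate ρ x| ≤ |x| := by
  unfold truncate
  split_ifs
  · exact le_rfl
  · rw [abs_zero]; exact abs_nonneg x

lemma abs_truncate_sub_self_le (hρ : 0 < ρ) (x : ℝ) : |truncate ρ x - x| ≤ x ^ 2 / ρ := by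
  unfold truncate
  split_ifs with h
  · rw [sub_self, abs_zero]; positivity
  · rw [zero_sub, abs_neg, le_div_iff₀ hρ, ← sq_abs]
    nlinarith [abs_nonneg x]

variable {Ω : Type*} [MeasurableSpace Ω] {μ : Measure Ω} {X : Ω → ℝ}

lemma MeasureTheory.Integrable.truncate (hX : Integrable X μ) :
    Integrable (fun ω => truncate ρ (X ω)) μ :=
  hX.mono ((measurable_truncate ρ).comp_aemeasurable hX.aemeasurable).aestronglyMeasurable
    (.of_forall fun ω => by simpa only [norm_eq_abs] using abs_truncate_le_abs_self ρ (X ω))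

lemma abs_integral_truncate_sub_integral_le (hρ : 0 < ρ) (hX : Integrable X μ)
    (hX2 : Integrable (fun ω => X ω ^ 2) μ) :
    |∫ ω, truncate ρ (X ω) ∂μ - ∫ ω, X ω ∂μ| ≤ (∫ ω, X ω ^ 2 ∂μ) / ρ := by
  rw [← integral_sub hX.truncate hX, ← integral_div]
  exact (abs_integral_le_integral_abs).trans <| integral_mono (hX.truncate.sub hX).abs
    (hX2.div_const ρ) fun ω => abs_truncate_sub_self_le hρ (X ω)

lemma integral_truncate_sub_integral_sq_le [IsProbabilityMeasure μ] (hX : AEMeasurable X μ)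
    (hX2 : Integrable (fun ω => X ω ^ 2) μ) :
    ∫ ω, (truncate ρ (X ω) - ∫ ω', truncate ρ (X ω') ∂μ) ^ 2 ∂μ ≤ ∫ ω, X ω ^ 2 ∂μ := by
  have hT : AEMeasurable (fun ω => truncate ρ (X ω)) μ :=
    (measurable_truncate ρ).comp_aemeasurable hX
  rw [← variance_eq_integral hT]
  refine (variance_le_expectation_sq hT.aestronglyMeasurable).trans ?_
  refine integral_mono_of_nonneg (.of_forall fun ω => sq_nonneg _) hX2 (.of_forall fun ω => ?_)
  simpa only [Pi.pow_apply, sq_abs] using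
    pow_le_pow_left₀ (abs_nonneg _) (abs_truncate_le_abs_self ρ (X ω)) 2

end Truncation

section TruncatedMean

variable {Ω : Type*} [MeasurableSpace Ω] {P : Measure Ω} [IsProbabilityMeasure P]
  {ι : Type*} [Fintype ι] [Nonempty ι] {K : ι → Ω → ℝ} {β M ρ s ε : ℝ}

lemma measureReal_truncated_mean_sub_ge_le (hK : ∀ i, Measurable (K i)) (hindep : iIndepFun K P)
    (hint : ∀ i, Integrable (K i) P) (hint2 : ∀ i, Integrable (fun ω => K i ω ^ 2) P)
    (hmean : ∀ i, ∫ ω, K i ω ∂P = β) (hsecond : ∀ i, ∫ ω, K i ω ^ 2 ∂P ≤ M)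
    (hρ : 0 < ρ) (hs : 0 ≤ s) (hsρ : s * (2 * ρ) ≤ 1) :
    P.real {ω | ε + M / ρ ≤ |1 / (Fintype.card ι : ℝ) * ∑ i, truncate ρ (K i ω) - β|}
      ≤ 2 * exp (-s * (Fintype.card ι * ε) + Fintype.card ι * M * s ^ 2) := by
  set n : ℝ := (Fintype.card ι : ℝ) with hn_def
  have hn : 0 < n := Nat.cast_pos.mpr Fintype.card_pos
  set m : ι → ℝ := fun i => ∫ ω, truncate ρ (K i ω) ∂P
  set Y : ι → Ω → ℝ := fun i ω => truncate ρ (K i ω) - m i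
  have hY : ∀ i, Measurable (Y i) := fun i => ((measurable_truncate ρ).comp (hK i)).sub_const _
  have hY_indep : iIndepFun Y P :=
    hindep.comp (fun i x => truncate ρ x - m i) fun i => (measurable_truncate ρ).sub_const _
  have hm_le : ∀ i, |m i| ≤ ρ := fun i => by
    simpa using norm_integral_le_of_norm_le_const (μ := P) (f := fun ω => truncate ρ (K i ω))
      (.of_forall fun ω => (norm_eq_abs _).trans_le (abs_truncate_le_bound hρ.le (K i ω)))
  have hY_le : ∀ i, ∀ᵐ ω ∂P, |Y i ω| ≤ 2 * ρ := fun i => .of_forall fun ω =>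
    (abs_sub _ _).trans (by linarith [abs_truncate_le_bound hρ.le (K i ω), hm_le i])
  have hY_mean : ∀ i, ∫ ω, Y i ω ∂P = 0 := fun i => by
    simp only [Y, integral_sub (hint i).truncate (integrable_const (m i)), integral_const,
      probReal_univ, one_smul, m, sub_self]
  have hY_sq : ∀ i, ∫ ω, Y i ω ^ 2 ∂P ≤ M := fun i =>
    (integral_truncate_sub_integral_sq_le (hK i).aemeasurable (hint2 i)).trans (hsecond i)
  have hbias : |∑ i, (m i - β)| ≤ n * (M / ρ) := by
    refine (Finset.abs_sum_le_sum_abs _ _).trans ?_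
    calc ∑ i, |m i - β| ≤ ∑ _i : ι, M / ρ := Finset.sum_le_sum fun i _ => by
          rw [← hmean i]
          exact (abs_integral_truncate_sub_integral_le hρ (hint i) (hint2 i)).trans
            (by gcongr; exact hsecond i)
      _ = n * (M / ρ) := by simp [n]
  have hsub : {ω | ε + M / ρ ≤ |1 / n * ∑ i, truncate ρ (K i ω) - β|}
      ⊆ {ω | n * ε ≤ |∑ i, Y i ω|} := fun ω hω => by
    have hsplit : 1 / n * ∑ i, truncate ρ (K i ω) - β = 1 / n * (∑ i, Y i ω + ∑ i, (m i - β)) := by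
      simp only [Y, sub_add_sub_cancel, Finset.sum_sub_distrib, Finset.sum_const,
        Finset.card_univ, nsmul_eq_mul, ← hn_def]
      field_simp
    have := (abs_add_le (∑ i, Y i ω) (∑ i, (m i - β))).trans (add_le_add le_rfl hbias)
    simp only [Set.mem_ofPred_eq, hsplit, abs_mul, abs_of_pos (one_div_pos.mpr hn)] at hω ⊢
    rw [div_mul_eq_mul_div, one_mul, le_div_iff₀ hn] at hω
    linarith
  exact (measureReal_mono hsub).trans
    (measureReal_abs_sum_ge_le_of_abs_le _ hY hY_indep hY_le hs hsρ hY_mean hY_sq)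

end TruncatedMean

/-- generic Bernstein-type concentration bound for the truncated
empirical mean, underlying the proof of Lemma 3 of the paper.
For every `M > 0` there is a `κ > 0`, depending only on `M`, such that for every
`n ≥ 3` and all i.i.d. `K₁, …, Kₙ` with `E[K₁] = β` and `E[K₁²] ≤ M`, the truncated
sample mean `β̂ = (1/n) Σᵢ Kᵢ 1_{|Kᵢ| ≤ ρₙ}` with `ρₙ = √(n / ln n)` satisfies
`P(|β̂ − β| ≥ κ √((ln n)/n)) ≤ 2 n⁻⁴`. -/
theorem truncated_mean_concentration (M : ℝ) (hM : 0 < M) :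
    ∃ κ : ℝ, 0 < κ ∧
      ∀ (Ω : Type u) (_ : MeasurableSpace Ω) (P : Measure Ω)
        (_ : IsProbabilityMeasure P)
        (n : ℕ), 3 ≤ n →
        ∀ (K : Fin n → Ω → ℝ),
          (∀ i, Measurable (K i)) →
          iIndepFun K P →
          (∀ i j, IdentDistrib (K i) (K j) P P) →
          ∀ (β : ℝ),
          (∀ i, Integrable (K i) P) →
          (∀ i, Integrable (fun ω => (K i ω) ^ 2) P) →
          (∀ i, ∫ ω, K i ω ∂P = β) →
          (∀ i, ∫ ω, (K i ω) ^ 2 ∂P ≤ M) →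
          P {ω | κ * Real.sqrt (Real.log n / n)
                  ≤ |(1 / (n : ℝ)) * (∑ i,
                        if |K i ω| ≤ Real.sqrt ((n : ℝ) / Real.log n)
                          then K i ω else 0) - β|}
            ≤ ENNReal.ofReal (2 / (n : ℝ) ^ 4) := by
  refine ⟨3 / 2 * M + 8, by positivity,
    fun Ω _ P _ n hn K hK hindep _ β hint hint2 hmean hsecond => ?_⟩
  have : Nonempty (Fin n) := ⟨⟨0, by omega⟩⟩
  have hn_pos : (0 : ℝ) < n := by positivity
  have hlog : 0 < Real.log n := Real.log_pos (by exact_mod_cast (by omega : 1 < n))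
  set t := √(Real.log n / n)
  have ht : 0 < t := sqrt_pos.mpr (by positivity)
  have hρ : √(n / Real.log n) = t⁻¹ := by rw [← inv_div, sqrt_inv]
  have hnt : n * t ^ 2 = Real.log n := by rw [sq_sqrt (by positivity)]; field_simp
  have key := measureReal_truncated_mean_sub_ge_le (ε := (3 / 2 * M + 8 - M) * t) (s := t / 2) hK
    hindep hint hint2 hmean hsecond (inv_pos.mpr ht) (by positivity) (le_of_eq (by field_simp))
  rw [Fintype.card_fin, div_inv_eq_mul, ← add_mul, sub_add_cancel,
    show -(t / 2) * (n * ((3 / 2 * M + 8 - M) * t)) + n * M * (t / 2) ^ 2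
      = -4 * (n * t ^ 2) by ring,
    hnt, ← hρ] at key
  rw [← ofReal_measureReal]
  refine ENNReal.ofReal_le_ofReal (key.trans_eq ?_)
  rw [neg_mul, exp_neg, show 4 * Real.log n = Real.log (n ^ 4) by rw [log_pow]; norm_num,
    exp_log (by positivity), div_eq_mul_inv]
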